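/- Let A_1, …, A_N be real n×n matrices and consider the linear switched system with vector fields f_i(x) = A_i x. Suppose B ⊆ ℝⁿ is a compact absorbing set for the switched system. Then every solution of the switched system converges to the origin: for every solution x, x(t) → 0 as t → ∞. -/

import Mathlib

/-- A solution of the linear switched system determined by the matrices `A i`:
a function differentiable on `[0,∞)` whose derivative at each `t ≥ 0` is `A i (x t)`
for some index `i` (arbitrary switching). -/
def IsSwitchedSolution {n N : ℕ} (A : Fin N → Matrix (Fin n) (Fin n) ℝ)
    (x : ℝ → EuclideanSpace ℝ (Fin n)) : Prop :=
  ∀ t : ℝ, 0 ≤ t → ∃ i : Fin N,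
    HasDerivWithinAt x (WithLp.toLp 2 ((A i).mulVec (x t))) (Set.Ici 0) t

/-- `M` is positively invariant for the linear switched system. -/
def PositivelyInvariant {n N : ℕ} (A : Fin N → Matrix (Fin n) (Fin n) ℝ)
    (M : Set (EuclideanSpace ℝ (Fin n))) : Prop :=
  ∀ x : ℝ → EuclideanSpace ℝ (Fin n), IsSwitchedSolution A x →
    x 0 ∈ M → ∀ t : ℝ, 0 ≤ t → x t ∈ M

/-- `M` is an absorbing set for the linear switched system. -/
def AbsorbingSet {n N : ℕ} (A : Fin N → Matrix (Fin n) (Fin n) ℝ)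
    (M : Set (EuclideanSpace ℝ (Fin n))) : Prop :=
  PositivelyInvariant A M ∧
    ∀ C : Set (EuclideanSpace ℝ (Fin n)), IsCompact C →
      ∃ tC : ℝ, 0 ≤ tC ∧
        ∀ x : ℝ → EuclideanSpace ℝ (Fin n), IsSwitchedSolution A x →
          x 0 ∈ C → ∀ t : ℝ, tC ≤ t → x t ∈ M

/-!
Solutions of a linear switched system are closed under scaling. If `x` is a solution and
`c > 0`, then `c • x` is a solution too, so it eventually enters the compact absorbing set
`B ⊆ closedBall 0 R`. Hence `‖x t‖ ≤ R / c` for large `t`, and `c` is arbitrary.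
-/

open Filter Topology

lemma tendsto_zero_of_forall_eventually_smul_mem {α E : Type*} [SeminormedAddCommGroup E]
    [NormedSpace ℝ E] {l : Filter α} {f : α → E} {B : Set E} (hB : Bornology.IsBounded B)
    (hf : ∀ c : ℝ, ∀ᶠ a in l, c • f a ∈ B) : Tendsto f l (𝓝 0) := by
  obtain ⟨R, hR, hBR⟩ := hB.exists_pos_norm_le
  refine Metric.nhds_basis_closedBall.tendsto_right_iff.2 fun ε hε => ?_
  have hc : 0 < R / ε := div_pos hR hε
  filter_upwards [hf (R / ε)] with a ha
  have hscaled : R / ε * ‖f a‖ ≤ R := by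
    simpa only [norm_smul, Real.norm_of_nonneg hc.le] using hBR _ ha
  rwa [mem_closedBall_zero_iff, ← mul_le_mul_iff_of_pos_left hc, div_mul_cancel₀ R hε.ne']

variable {n N : ℕ} {A : Fin N → Matrix (Fin n) (Fin n) ℝ}

lemma IsSwitchedSolution.const_smul {x : ℝ → EuclideanSpace ℝ (Fin n)}
    (hx : IsSwitchedSolution A x) (c : ℝ) : IsSwitchedSolution A (c • x) := by
  intro t ht
  obtain ⟨i, hi⟩ := hx t ht
  refine ⟨i, (hi.const_smul c).congr_deriv ?_⟩
  simp only [Pi.smul_apply, WithLp.ofLp_smul, Matrix.mulVec_smul, WithLp.toLp_smul]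

lemma AbsorbingSet.eventually_mem {M : Set (EuclideanSpace ℝ (Fin n))}
    (hM : AbsorbingSet A M) {x : ℝ → EuclideanSpace ℝ (Fin n)} (hx : IsSwitchedSolution A x) :
    ∀ᶠ t in atTop, x t ∈ M := by
  obtain ⟨tC, -, htC⟩ := hM.2 {x 0} isCompact_singleton
  exact eventually_atTop.2 ⟨tC, htC x hx rfl⟩

/-- If a linear switched system has a compact absorbing set, then every solution
converges to the origin. -/
theorem solutions_tendsto_zero_of_absorbing {n N : ℕ}
    (A : Fin N → Matrix (Fin n) (Fin n) ℝ)
    (B : Set (EuclideanSpace ℝ (Fin n))) (hB : IsCompact B)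
    (habs : AbsorbingSet A B) :
    ∀ x : ℝ → EuclideanSpace ℝ (Fin n), IsSwitchedSolution A x →
      Filter.Tendsto x Filter.atTop (nhds 0) := fun _ hx =>
  tendsto_zero_of_forall_eventually_smul_mem hB.isBounded fun c =>
    habs.eventually_mem (hx.const_smul c)
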